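/- arXiv:2111.10640 — 6 statements merged into one kernel-verified Lean document; each statement's English description precedes it below -/
import Mathlib

section
/- Let Ω : X → Σ be a quasi-linear map from X to Y with ambient space Σ, and let Ω⁻¹ : Ran Ω → X be an inverse of Ω. Then Ω⁻¹ is quasi-linear from Ran Ω to Dom Ω with ambient space X: Ω⁻¹ is homogeneous and there is a constant C′ > 0 such that for all α, β ∈ Ran Ω one has Ω⁻¹(α+β) − Ω⁻¹α − Ω⁻¹β ∈ Dom Ω and ‖Ω⁻¹(α+β) − Ω⁻¹α − Ω⁻¹β‖_D ≤ C′(‖α‖_R + ‖β‖_R). -/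
/-- The inverse of a quasi-linear map `Ω : X → Σ` (with values controlled by a subspace `Y`
with its own norm `nY`) is quasi-linear from `Ran Ω` to `Dom Ω` with ambient space `X`. -/
theorem inverse_of_quasilinear_is_quasilinear
    (X S : Type) [NormedAddCommGroup X] [NormedSpace ℝ X] [CompleteSpace X]
    [NormedAddCommGroup S] [NormedSpace ℝ S] [CompleteSpace S]
    -- `Y` is a linear subspace of `Σ` with a norm `nY` whose inclusion is continuous
    (Y : Submodule ℝ S) (nY : S → ℝ)
    (hY0 : ∀ y ∈ Y, 0 ≤ nY y)
    (hYadd : ∀ y ∈ Y, ∀ y' ∈ Y, nY (y + y') ≤ nY y + nY y')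
    (hYsmul : ∀ (c : ℝ), ∀ y ∈ Y, nY (c • y) = |c| * nY y)
    (hYdef : ∀ y ∈ Y, nY y = 0 → y = 0)
    (hYincl : ∃ c > 0, ∀ y ∈ Y, ‖y‖ ≤ c * nY y)
    -- `Ω` is a homogeneous quasi-linear map with constant `C`
    (Ω : X → S)
    (hΩhom : ∀ (c : ℝ) (x : X), Ω (c • x) = c • Ω x)
    (C : ℝ) (hC : 0 < C)
    (hΩql : ∀ x₁ x₂ : X, Ω (x₁ + x₂) - Ω x₁ - Ω x₂ ∈ Y ∧
      nY (Ω (x₁ + x₂) - Ω x₁ - Ω x₂) ≤ C * (‖x₁‖ + ‖x₂‖))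
    -- domain and range of `Ω`, with their quasinorms
    (Dom : Set X) (hDom : Dom = {x : X | Ω x ∈ Y})
    (domN : X → ℝ) (hdomN : ∀ x, domN x = nY (Ω x) + ‖x‖)
    (Ran : Set S) (hRan : Ran = {β : S | ∃ x : X, β - Ω x ∈ Y})
    (ranN : S → ℝ)
    (hranN : ∀ β, ranN β = sInf {r : ℝ | ∃ x : X, β - Ω x ∈ Y ∧ r = nY (β - Ω x) + ‖x‖})
    -- `Ωinv` is an inverse of `Ω` with constant `D`
    (Ωinv : S → X)
    (hinvhom : ∀ (c : ℝ), ∀ β ∈ Ran, Ωinv (c • β) = c • Ωinv β)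
    (D : ℝ) (hD : 0 < D)
    (hinv : ∀ β ∈ Ran, β - Ω (Ωinv β) ∈ Y ∧ nY (β - Ω (Ωinv β)) + ‖Ωinv β‖ ≤ D * ranN β) :
    ∃ C' > 0, ∀ α ∈ Ran, ∀ β ∈ Ran,
      Ωinv (α + β) - Ωinv α - Ωinv β ∈ Dom ∧
      domN (Ωinv (α + β) - Ωinv α - Ωinv β) ≤ C' * (ranN α + ranN β) := by

  -- basic facts about `nY`
  have hneg : ∀ y ∈ Y, nY (-y) = nY y := by
    intro y hy
    have h := hYsmul (-1) y hy
    simpa using h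
  have hsub : ∀ y ∈ Y, ∀ z ∈ Y, nY (y - z) ≤ nY y + nY z := by
    intro y hy z hz
    have h := hYadd y hy (-z) (Y.neg_mem hz)
    rw [hneg z hz, ← sub_eq_add_neg] at h
    exact h
  -- basic facts about `ranN`
  have hbdd : ∀ γ : S, BddBelow {r : ℝ | ∃ x : X, γ - Ω x ∈ Y ∧ r = nY (γ - Ω x) + ‖x‖} := by
    intro γ
    refine ⟨0, ?_⟩
    rintro r ⟨x, hx, rfl⟩
    exact add_nonneg (hY0 _ hx) (norm_nonneg x)
  have hle : ∀ (γ : S) (x : X), γ - Ω x ∈ Y → ranN γ ≤ nY (γ - Ω x) + ‖x‖ := by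
    intro γ x hx
    rw [hranN]
    exact csInf_le (hbdd γ) ⟨x, hx, rfl⟩
  have hnonneg : ∀ γ ∈ Ran, 0 ≤ ranN γ := by
    intro γ hγ
    rw [hRan] at hγ
    obtain ⟨x, hx⟩ := hγ
    rw [hranN]
    refine le_csInf ⟨_, x, hx, rfl⟩ ?_
    rintro r ⟨x', hx', rfl⟩
    exact add_nonneg (hY0 _ hx') (norm_nonneg x')
  refine ⟨D + 2*D*D + 3*C*D*D + 3*C*D + C*C*D*D, by positivity, ?_⟩
  intro α hα β hβ
  obtain ⟨hyα, hbα⟩ := hinv α hα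
  obtain ⟨hyβ, hbβ⟩ := hinv β hβ
  obtain ⟨hz2, hbz2⟩ := hΩql (Ωinv α) (Ωinv β)
  have hid1 : (α + β) - Ω (Ωinv α + Ωinv β)
      = ((α - Ω (Ωinv α)) + (β - Ω (Ωinv β)))
        - (Ω (Ωinv α + Ωinv β) - Ω (Ωinv α) - Ω (Ωinv β)) := by abel
  have hmem1 : (α + β) - Ω (Ωinv α + Ωinv β) ∈ Y := by
    rw [hid1]; exact Y.sub_mem (Y.add_mem hyα hyβ) hz2
  have hαβ : α + β ∈ Ran := by rw [hRan]; exact ⟨_, hmem1⟩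
  obtain ⟨hyαβ, hbαβ⟩ := hinv (α + β) hαβ
  set u := Ωinv (α + β) with hu
  set a := Ωinv α with ha
  set b := Ωinv β with hb
  set w := u - a - b with hw
  obtain ⟨hz1, hbz1⟩ := hΩql w (a + b)
  have hwu : w + (a + b) = u := by rw [hw]; abel
  rw [hwu] at hz1 hbz1
  -- key algebraic identity
  have hkey : Ω w = (((α - Ω a) + (β - Ω b)) - ((α + β) - Ω u)
      - (Ω (a + b) - Ω a - Ω b)) - (Ω u - Ω w - Ω (a + b)) := by abel
  -- memberships
  have m1 : (α - Ω a) + (β - Ω b) ∈ Y := Y.add_mem hyα hyβ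
  have m2 : ((α - Ω a) + (β - Ω b)) - ((α + β) - Ω u) ∈ Y := Y.sub_mem m1 hyαβ
  have m3 : ((α - Ω a) + (β - Ω b)) - ((α + β) - Ω u) - (Ω (a + b) - Ω a - Ω b) ∈ Y :=
    Y.sub_mem m2 hz2
  have hΩwY : Ω w ∈ Y := by rw [hkey]; exact Y.sub_mem m3 hz1
  -- triangle inequalities
  have t1 : nY ((α - Ω a) + (β - Ω b)) ≤ nY (α - Ω a) + nY (β - Ω b) :=
    hYadd _ hyα _ hyβ
  have t2 : nY (((α - Ω a) + (β - Ω b)) - ((α + β) - Ω u))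
      ≤ nY ((α - Ω a) + (β - Ω b)) + nY ((α + β) - Ω u) := hsub _ m1 _ hyαβ
  have t3 : nY (((α - Ω a) + (β - Ω b)) - ((α + β) - Ω u) - (Ω (a + b) - Ω a - Ω b))
      ≤ nY (((α - Ω a) + (β - Ω b)) - ((α + β) - Ω u)) + nY (Ω (a + b) - Ω a - Ω b) :=
    hsub _ m2 _ hz2
  have t4 : nY (Ω w)
      ≤ nY (((α - Ω a) + (β - Ω b)) - ((α + β) - Ω u) - (Ω (a + b) - Ω a - Ω b))
        + nY (Ω u - Ω w - Ω (a + b)) := by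
    conv_lhs => rw [hkey]
    exact hsub _ m3 _ hz1
  -- numerical bounds
  have hrα0 : 0 ≤ ranN α := hnonneg α hα
  have hrβ0 : 0 ≤ ranN β := hnonneg β hβ
  have hAB : ‖a‖ + ‖b‖ ≤ D * (ranN α + ranN β) := by
    have h1 := hY0 _ hyα
    have h2 := hY0 _ hyβ
    linarith
  have hz2T : nY (Ω (a + b) - Ω a - Ω b) ≤ C * (D * (ranN α + ranN β)) :=
    hbz2.trans (mul_le_mul_of_nonneg_left hAB hC.le)
  have hrab : ranN (α + β) ≤ D * (ranN α + ranN β) + C * (D * (ranN α + ranN β)) := by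
    have h0 := hle (α + β) (a + b) hmem1
    have h1 : nY ((α + β) - Ω (a + b))
        ≤ nY ((α - Ω a) + (β - Ω b)) + nY (Ω (a + b) - Ω a - Ω b) := by
      rw [hid1]; exact hsub _ m1 _ hz2
    have h2 := norm_add_le a b
    linarith
  have hDrab : D * ranN (α + β)
      ≤ D * (D * (ranN α + ranN β) + C * (D * (ranN α + ranN β))) :=
    mul_le_mul_of_nonneg_left hrab hD.le
  have hnw : ‖w‖ ≤ ‖u‖ + ‖a‖ + ‖b‖ := by
    rw [hw]
    calc ‖u - a - b‖ ≤ ‖u - a‖ + ‖b‖ := norm_sub_le _ _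
      _ ≤ ‖u‖ + ‖a‖ + ‖b‖ := by linarith [norm_sub_le u a]
  have hwab : ‖w‖ + ‖a + b‖
      ≤ D * (D * (ranN α + ranN β) + C * (D * (ranN α + ranN β)))
        + D * (ranN α + ranN β) + D * (ranN α + ranN β) := by
    have h1 := hY0 _ hyαβ
    have h2 := norm_add_le a b
    linarith
  have hz1T : nY (Ω u - Ω w - Ω (a + b))
      ≤ C * (D * (D * (ranN α + ranN β) + C * (D * (ranN α + ranN β)))
        + D * (ranN α + ranN β) + D * (ranN α + ranN β)) :=
    hbz1.trans (mul_le_mul_of_nonneg_left hwab hC.le)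
  constructor
  · rw [hDom]; exact hΩwY
  · rw [hdomN]
    have h1 := hY0 _ hyαβ
    have h2 := norm_nonneg u
    have h3 := norm_nonneg a
    have h4 := norm_nonneg b
    nlinarith [hbα, hbβ, hbαβ, hDrab, t1, t2, t3, t4, hz1T, hz2T, hnw]
end

section
/- Let Ω : X → Σ be a quasi-linear map from X to Y with ambient space Σ, and let Ω₁⁻¹ and Ω₂⁻¹ be two inverses of Ω (obtained from bounded homogeneous selections with constants ≤ D). Then Ω₁⁻¹ and Ω₂⁻¹ are boundedly equivalent: for every β ∈ Ran Ω one has Ω₁⁻¹β − Ω₂⁻¹β ∈ Dom Ω, and there is a constant K (depending only on the quasi-linearity constant of Ω and on D) such that ‖Ω₁⁻¹β − Ω₂⁻¹β‖_D ≤ K‖β‖_R for all β ∈ Ran Ω. -/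
/-- Two inverses of a quasi-linear map `Ω : X → Σ` (each obtained from a bounded homogeneous
selection with constant `≤ D`) are boundedly equivalent: their difference takes values in
`Dom Ω` and is bounded from `Ran Ω` to `Dom Ω`. -/
theorem inverses_of_quasilinear_boundedly_equivalent
    (X S : Type) [NormedAddCommGroup X] [NormedSpace ℝ X] [CompleteSpace X]
    [NormedAddCommGroup S] [NormedSpace ℝ S] [CompleteSpace S]
    -- `Y` is a linear subspace of `Σ` with a norm `nY` whose inclusion is continuous
    (Y : Submodule ℝ S) (nY : S → ℝ)
    (hY0 : ∀ y ∈ Y, 0 ≤ nY y)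
    (hYadd : ∀ y ∈ Y, ∀ y' ∈ Y, nY (y + y') ≤ nY y + nY y')
    (hYsmul : ∀ (c : ℝ), ∀ y ∈ Y, nY (c • y) = |c| * nY y)
    (hYdef : ∀ y ∈ Y, nY y = 0 → y = 0)
    (hYincl : ∃ c > 0, ∀ y ∈ Y, ‖y‖ ≤ c * nY y)
    -- `Ω` is a homogeneous quasi-linear map with constant `C`
    (Ω : X → S)
    (hΩhom : ∀ (c : ℝ) (x : X), Ω (c • x) = c • Ω x)
    (C : ℝ) (hC : 0 < C)
    (hΩql : ∀ x₁ x₂ : X, Ω (x₁ + x₂) - Ω x₁ - Ω x₂ ∈ Y ∧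
      nY (Ω (x₁ + x₂) - Ω x₁ - Ω x₂) ≤ C * (‖x₁‖ + ‖x₂‖))
    -- domain and range of `Ω`, with their quasinorms
    (Dom : Set X) (hDom : Dom = {x : X | Ω x ∈ Y})
    (domN : X → ℝ) (hdomN : ∀ x, domN x = nY (Ω x) + ‖x‖)
    (Ran : Set S) (hRan : Ran = {β : S | ∃ x : X, β - Ω x ∈ Y})
    (ranN : S → ℝ)
    (hranN : ∀ β, ranN β = sInf {r : ℝ | ∃ x : X, β - Ω x ∈ Y ∧ r = nY (β - Ω x) + ‖x‖})
    -- two inverses of `Ω`, both with constant `D`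
    (D : ℝ) (hD : 0 < D)
    (Ωinv₁ : S → X)
    (hinvhom₁ : ∀ (c : ℝ), ∀ β ∈ Ran, Ωinv₁ (c • β) = c • Ωinv₁ β)
    (hinv₁ : ∀ β ∈ Ran, β - Ω (Ωinv₁ β) ∈ Y ∧ nY (β - Ω (Ωinv₁ β)) + ‖Ωinv₁ β‖ ≤ D * ranN β)
    (Ωinv₂ : S → X)
    (hinvhom₂ : ∀ (c : ℝ), ∀ β ∈ Ran, Ωinv₂ (c • β) = c • Ωinv₂ β)
    (hinv₂ : ∀ β ∈ Ran, β - Ω (Ωinv₂ β) ∈ Y ∧ nY (β - Ω (Ωinv₂ β)) + ‖Ωinv₂ β‖ ≤ D * ranN β) :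
    ∃ K > 0, ∀ β ∈ Ran,
      Ωinv₁ β - Ωinv₂ β ∈ Dom ∧ domN (Ωinv₁ β - Ωinv₂ β) ≤ K * ranN β := by
  refine ⟨3 * C * D + 4 * D, by positivity, fun β hβ => ?_⟩
  obtain ⟨h1Y, h1n⟩ := hinv₁ β hβ
  obtain ⟨h2Y, h2n⟩ := hinv₂ β hβ
  set x₁ := Ωinv₁ β
  set x₂ := Ωinv₂ β
  obtain ⟨hqY, hqn⟩ := hΩql (x₁ - x₂) x₂
  rw [sub_add_cancel] at hqY hqn
  -- key identity
  have hkey : Ω (x₁ - x₂) =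
      (-(Ω x₁ - Ω (x₁ - x₂) - Ω x₂) + -(β - Ω x₁)) + (β - Ω x₂) := by abel
  have habY : -(Ω x₁ - Ω (x₁ - x₂) - Ω x₂) + -(β - Ω x₁) ∈ Y :=
    Y.add_mem (Y.neg_mem hqY) (Y.neg_mem h1Y)
  have hmem : Ω (x₁ - x₂) ∈ Y := by
    rw [hkey]; exact Y.add_mem habY h2Y
  have hneg : ∀ y ∈ Y, nY (-y) = nY y := by
    intro y hy
    have := hYsmul (-1) y hy
    simpa using this
  -- bounds
  have hranN0 : 0 ≤ ranN β := by
    by_contra h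
    push_neg at h
    have : D * ranN β < 0 := mul_neg_of_pos_of_neg hD h
    have h0 : 0 ≤ nY (β - Ω x₁) + ‖x₁‖ :=
      add_nonneg (hY0 _ h1Y) (norm_nonneg _)
    linarith
  have hx1 : ‖x₁‖ ≤ D * ranN β := le_trans (le_add_of_nonneg_left (hY0 _ h1Y)) h1n
  have hx2 : ‖x₂‖ ≤ D * ranN β := le_trans (le_add_of_nonneg_left (hY0 _ h2Y)) h2n
  have hn1 : nY (β - Ω x₁) ≤ D * ranN β :=
    le_trans (le_add_of_nonneg_right (norm_nonneg _)) h1n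
  have hn2 : nY (β - Ω x₂) ≤ D * ranN β :=
    le_trans (le_add_of_nonneg_right (norm_nonneg _)) h2n
  have hdiff : ‖x₁ - x₂‖ ≤ 2 * (D * ranN β) := by
    calc ‖x₁ - x₂‖ ≤ ‖x₁‖ + ‖x₂‖ := norm_sub_le _ _
    _ ≤ 2 * (D * ranN β) := by linarith
  have htri : nY (Ω (x₁ - x₂)) ≤
      nY (Ω x₁ - Ω (x₁ - x₂) - Ω x₂) + nY (β - Ω x₁) + nY (β - Ω x₂) := by
    calc nY (Ω (x₁ - x₂))
        = nY ((-(Ω x₁ - Ω (x₁ - x₂) - Ω x₂) + -(β - Ω x₁)) + (β - Ω x₂)) := by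
          conv_lhs => rw [hkey]
      _ ≤ nY (-(Ω x₁ - Ω (x₁ - x₂) - Ω x₂) + -(β - Ω x₁)) + nY (β - Ω x₂) :=
          hYadd _ habY _ h2Y
      _ ≤ nY (-(Ω x₁ - Ω (x₁ - x₂) - Ω x₂)) + nY (-(β - Ω x₁)) + nY (β - Ω x₂) := by
          have := hYadd _ (Y.neg_mem hqY) _ (Y.neg_mem h1Y)
          linarith
      _ = nY (Ω x₁ - Ω (x₁ - x₂) - Ω x₂) + nY (β - Ω x₁) + nY (β - Ω x₂) := by
          rw [hneg _ hqY, hneg _ h1Y]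
  refine ⟨by rw [hDom]; exact hmem, ?_⟩
  rw [hdomN]
  have hq' : nY (Ω x₁ - Ω (x₁ - x₂) - Ω x₂) ≤ C * (3 * (D * ranN β)) := by
    calc nY (Ω x₁ - Ω (x₁ - x₂) - Ω x₂) ≤ C * (‖x₁ - x₂‖ + ‖x₂‖) := hqn
    _ ≤ C * (3 * (D * ranN β)) := by
        apply mul_le_mul_of_nonneg_left _ hC.le
        linarith
  nlinarith [htri]
end

section
/- Let T₁ : X₁ → Y and T₂ : X₂ → Y be continuous linear operators between Banach spaces such that T₁(X₁) = T₂(X₂). Then the quotient Banach spaces X₁/ker T₁ and X₂/ker T₂ are isomorphic, i.e. there is a continuous linear bijection between them whose inverse is continuous. -/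
open Submodule

variable {X Y : Type} [NormedAddCommGroup X] [NormedSpace ℝ X]
    [NormedAddCommGroup Y] [NormedSpace ℝ Y] (T : X →L[ℝ] Y)

noncomputable def TN : NormedAddGroupHom X Y :=
  { toFun := T, map_add' := map_add T, bound' := ⟨‖T‖, T.le_opNorm⟩ }

noncomputable def liftCLM : (X ⧸ LinearMap.ker (T : X →ₗ[ℝ] Y)) →L[ℝ] Y :=
  LinearMap.mkContinuous ((LinearMap.ker (T : X →ₗ[ℝ] Y)).liftQ (T : X →ₗ[ℝ] Y) le_rfl) ‖T‖ (by
    intro x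
    have h2 : ∀ m ∈ (LinearMap.ker (T : X →ₗ[ℝ] Y)).toAddSubgroup, TN T m = 0 := fun m hm => hm
    have h1 : ((LinearMap.ker (T : X →ₗ[ℝ] Y)).liftQ (T : X →ₗ[ℝ] Y) le_rfl) x
        = QuotientAddGroup.lift _ (TN T).toAddMonoidHom h2 x := by
      induction x using Quotient.ind
      rfl
    rw [h1]
    calc _ ≤ ‖TN T‖ * ‖x‖ := QuotientAddGroup.norm_lift_apply_le (TN T) h2 x
      _ ≤ ‖T‖ * ‖x‖ := by
        gcongr
        exact NormedAddGroupHom.opNorm_le_bound _ (norm_nonneg _) T.le_opNorm)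

@[simp] lemma liftCLM_mk (m : X) : liftCLM T (Submodule.Quotient.mk m) = T m := rfl

lemma liftCLM_inj : Function.Injective (liftCLM T) := by
  intro a b hab
  obtain ⟨m, rfl⟩ := Submodule.Quotient.mk_surjective _ a
  obtain ⟨m', rfl⟩ := Submodule.Quotient.mk_surjective _ b
  rw [Submodule.Quotient.eq]
  simp only [liftCLM_mk] at hab
  simp [LinearMap.mem_ker, map_sub, hab]

lemma liftCLM_range : LinearMap.range (liftCLM T : (X ⧸ LinearMap.ker (T : X →ₗ[ℝ] Y)) →ₗ[ℝ] Y) = LinearMap.range (T : X →ₗ[ℝ] Y) := by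
  apply le_antisymm
  · rintro y ⟨x, rfl⟩
    obtain ⟨m, rfl⟩ := Submodule.Quotient.mk_surjective _ x
    exact ⟨_, rfl⟩
  · rintro y ⟨m, rfl⟩
    exact ⟨Submodule.Quotient.mk m, rfl⟩

set_option maxHeartbeats 1000000 in
/-- If `T₁ : X₁ → Y` and `T₂ : X₂ → Y` are continuous operators between Banach spaces with
`T₁(X₁) = T₂(X₂)`, then the quotients `X₁/ker T₁` and `X₂/ker T₂` are isomorphic. -/
theorem quotients_by_kernels_isomorphic
    (X₁ X₂ Y : Type) [NormedAddCommGroup X₁] [NormedSpace ℝ X₁] [CompleteSpace X₁]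
    [NormedAddCommGroup X₂] [NormedSpace ℝ X₂] [CompleteSpace X₂]
    [NormedAddCommGroup Y] [NormedSpace ℝ Y] [CompleteSpace Y]
    (T₁ : X₁ →L[ℝ] Y) (T₂ : X₂ →L[ℝ] Y)
    (h : LinearMap.range (T₁ : X₁ →ₗ[ℝ] Y) = LinearMap.range (T₂ : X₂ →ₗ[ℝ] Y)) :
    Nonempty ((X₁ ⧸ LinearMap.ker (T₁ : X₁ →ₗ[ℝ] Y)) ≃L[ℝ] (X₂ ⧸ LinearMap.ker (T₂ : X₂ →ₗ[ℝ] Y))) := by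
  haveI : IsClosed ((LinearMap.ker (T₁ : X₁ →ₗ[ℝ] Y) : Submodule ℝ X₁) : Set X₁) := ContinuousLinearMap.isClosed_ker T₁
  haveI : IsClosed ((LinearMap.ker (T₂ : X₂ →ₗ[ℝ] Y) : Submodule ℝ X₂) : Set X₂) := ContinuousLinearMap.isClosed_ker T₂
  set S₁ := liftCLM T₁ with hS₁
  set S₂ := liftCLM T₂ with hS₂
  have inj₁ : Function.Injective S₁ := liftCLM_inj T₁
  have inj₂ : Function.Injective S₂ := liftCLM_inj T₂
  have hr : LinearMap.range (S₁ : (X₁ ⧸ LinearMap.ker (T₁ : X₁ →ₗ[ℝ] Y)) →ₗ[ℝ] Y)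
      = LinearMap.range (S₂ : (X₂ ⧸ LinearMap.ker (T₂ : X₂ →ₗ[ℝ] Y)) →ₗ[ℝ] Y) := by
    simp only [hS₁, hS₂]
    exact (liftCLM_range T₁).trans (h.trans (liftCLM_range T₂).symm)
  set e : (X₁ ⧸ LinearMap.ker (T₁ : X₁ →ₗ[ℝ] Y)) ≃ₗ[ℝ] (X₂ ⧸ LinearMap.ker (T₂ : X₂ →ₗ[ℝ] Y)) :=
    (LinearEquiv.ofInjective (S₁ : (X₁ ⧸ LinearMap.ker (T₁ : X₁ →ₗ[ℝ] Y)) →ₗ[ℝ] Y) inj₁).trans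
      ((LinearEquiv.ofEq _ _ hr).trans
        (LinearEquiv.ofInjective (S₂ : (X₂ ⧸ LinearMap.ker (T₂ : X₂ →ₗ[ℝ] Y)) →ₗ[ℝ] Y) inj₂).symm) with he
  have key : ∀ u, S₂ (e u) = S₁ u := by
    intro u
    have := (LinearEquiv.ofInjective (S₂ : (X₂ ⧸ LinearMap.ker (T₂ : X₂ →ₗ[ℝ] Y)) →ₗ[ℝ] Y) inj₂).apply_symm_apply
      ⟨S₁ u, hr ▸ LinearMap.mem_range_self _ u⟩
    have h2 : ∀ v, ((LinearEquiv.ofInjective (S₂ : (X₂ ⧸ LinearMap.ker (T₂ : X₂ →ₗ[ℝ] Y)) →ₗ[ℝ] Y) inj₂) v : Y) = S₂ v :=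
      fun v => rfl
    rw [← h2] at *
    calc ((LinearEquiv.ofInjective (S₂ : (X₂ ⧸ LinearMap.ker (T₂ : X₂ →ₗ[ℝ] Y)) →ₗ[ℝ] Y) inj₂) (e u) : Y)
        = (⟨S₁ u, hr ▸ LinearMap.mem_range_self _ u⟩ :
            LinearMap.range (S₂ : (X₂ ⧸ LinearMap.ker (T₂ : X₂ →ₗ[ℝ] Y)) →ₗ[ℝ] Y)) := by rw [he]; congr 1
      _ = S₁ u := rfl
  have hgraph : IsClosed (e.toLinearMap.graph : Set ((X₁ ⧸ LinearMap.ker (T₁ : X₁ →ₗ[ℝ] Y)) × (X₂ ⧸ LinearMap.ker (T₂ : X₂ →ₗ[ℝ] Y)))) := by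
    have : (e.toLinearMap.graph : Set ((X₁ ⧸ LinearMap.ker (T₁ : X₁ →ₗ[ℝ] Y)) × (X₂ ⧸ LinearMap.ker (T₂ : X₂ →ₗ[ℝ] Y)))) =
        (fun p : (X₁ ⧸ LinearMap.ker (T₁ : X₁ →ₗ[ℝ] Y)) × (X₂ ⧸ LinearMap.ker (T₂ : X₂ →ₗ[ℝ] Y)) =>
          S₁ p.1 - S₂ p.2) ⁻¹' {0} := by
      ext ⟨u, v⟩
      simp only [SetLike.mem_coe, LinearMap.mem_graph_iff, Set.mem_preimage,
        Set.mem_singleton_iff, sub_eq_zero, LinearEquiv.coe_coe]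
      constructor
      · rintro rfl; exact (key u).symm
      · intro hv
        apply inj₂
        rw [key u, hv]
    rw [this]
    exact IsClosed.preimage ((S₁.continuous.comp continuous_fst).sub (S₂.continuous.comp continuous_snd)) isClosed_singleton
  have hcont : Continuous e := by
    have hc := LinearMap.continuous_of_isClosed_graph (g := e.toLinearMap) hgraph
    rwa [LinearEquiv.coe_coe] at hc
  exact ⟨{ e with continuous_toFun := hcont, continuous_invFun := e.continuous_symm hcont }⟩
end

section
/- In the selection setting, the domain of the differential Ω_{Ψ,Φ} = Ψ ∘ B_Φ, namely Dom Ω_{Ψ,Φ} = {x ∈ X_Φ : Ω_{Ψ,Φ}x ∈ Ψ(ker Φ)}, coincides as a set with Φ(ker Ψ), and the quasinorm ‖x‖_D = ‖Ω_{Ψ,Φ}x‖_{Ψ(ker Φ)} + ‖x‖_Φ on this set is equivalent to the quotient quasinorm inf{‖g‖_F : g ∈ ker Ψ, Φg = x}. -/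
noncomputable section

variable {F W Z : Type}

/-- The quotient quasinorm of `X_Φ = Φ(F)`. -/
noncomputable def quotNorm [NormedAddCommGroup F] [NormedSpace ℝ F]
    [NormedAddCommGroup Z] [NormedSpace ℝ Z] (Φ : F →L[ℝ] Z) (x : Z) : ℝ :=
  sInf {r : ℝ | ∃ f : F, Φ f = x ∧ r = ‖f‖}

/-- The quotient quasinorm of `Ψ(ker Φ)`. -/
noncomputable def kerQuotNorm [NormedAddCommGroup F] [NormedSpace ℝ F]
    [NormedAddCommGroup Z] [NormedSpace ℝ Z] [NormedAddCommGroup W] [NormedSpace ℝ W]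
    (Φ : F →L[ℝ] Z) (Ψ : F →L[ℝ] W) (w : W) : ℝ :=
  sInf {r : ℝ | ∃ g : F, Φ g = 0 ∧ Ψ g = w ∧ r = ‖g‖}

end
/-- In the selection setting, the domain of the differential `Ω_{Ψ,Φ} = Ψ ∘ B_Φ` coincides with
`Φ(ker Ψ)`, and on it the quasinorm `‖Ω_{Ψ,Φ}x‖_{Ψ(ker Φ)} + ‖x‖_Φ` is equivalent to the
quotient quasinorm inherited from `ker Ψ`. -/
theorem domain_of_differential
    (F W Z : Type) [NormedAddCommGroup F] [NormedSpace ℝ F] [CompleteSpace F]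
    [NormedAddCommGroup W] [NormedSpace ℝ W] [CompleteSpace W]
    [NormedAddCommGroup Z] [NormedSpace ℝ Z] [CompleteSpace Z]
    (Φ : F →L[ℝ] Z) (Ψ : F →L[ℝ] W)
    (B : Z → F) (K : ℝ) (hK : 0 < K)
    (hBhom : ∀ (c : ℝ), ∀ x ∈ LinearMap.range (Φ : F →ₗ[ℝ] Z), B (c • x) = c • B x)
    (hBsel : ∀ x ∈ LinearMap.range (Φ : F →ₗ[ℝ] Z), Φ (B x) = x)
    (hBbd : ∀ x ∈ LinearMap.range (Φ : F →ₗ[ℝ] Z), ‖B x‖ ≤ K * quotNorm Φ x) :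
    -- the domain of `Ω_{Ψ,Φ}` is `Φ(ker Ψ)` ...
    {x : Z | x ∈ LinearMap.range (Φ : F →ₗ[ℝ] Z) ∧ Ψ (B x) ∈ ⇑Ψ '' (LinearMap.ker (Φ : F →ₗ[ℝ] Z) : Set F)} =
      ⇑Φ '' (LinearMap.ker (Ψ : F →ₗ[ℝ] W) : Set F) ∧
    -- ... and the two quasinorms are equivalent on it
    ∃ C > 0, ∀ x ∈ ⇑Φ '' (LinearMap.ker (Ψ : F →ₗ[ℝ] W) : Set F),
      kerQuotNorm Φ Ψ (Ψ (B x)) + quotNorm Φ x ≤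
          C * sInf {r : ℝ | ∃ g : F, Ψ g = 0 ∧ Φ g = x ∧ r = ‖g‖} ∧
      sInf {r : ℝ | ∃ g : F, Ψ g = 0 ∧ Φ g = x ∧ r = ‖g‖} ≤
          C * (kerQuotNorm Φ Ψ (Ψ (B x)) + quotNorm Φ x) := by
  constructor
  · ext x
    simp only [Set.mem_setOf_eq, Set.mem_image, SetLike.mem_coe, LinearMap.mem_ker]
    constructor
    · rintro ⟨hx, g, hgker, hgΨ⟩
      exact ⟨B x - g, by simp [hgΨ], by simp only [ContinuousLinearMap.coe_coe] at hgker; simp [hBsel x hx, hgker]⟩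
    · rintro ⟨g, hgker, rfl⟩
      have hx : Φ g ∈ LinearMap.range (Φ : F →ₗ[ℝ] Z) := ⟨g, rfl⟩
      exact ⟨hx, B (Φ g) - g, by simp [hBsel _ hx], by simp only [ContinuousLinearMap.coe_coe] at hgker; simp [hgker]⟩
  · refine ⟨K + 2, by linarith, ?_⟩
    rintro x ⟨g0, hg0ker, rfl⟩
    have hg0 : Ψ g0 = 0 := hg0ker
    have hx : Φ g0 ∈ LinearMap.range (Φ : F →ₗ[ℝ] Z) := ⟨g0, rfl⟩
    set x := Φ g0 with hxdef
    set S : Set ℝ := {r : ℝ | ∃ g : F, Ψ g = 0 ∧ Φ g = x ∧ r = ‖g‖} with hSdef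
    set T : Set ℝ := {r : ℝ | ∃ g : F, Φ g = 0 ∧ Ψ g = Ψ (B x) ∧ r = ‖g‖} with hTdef
    set Q : Set ℝ := {r : ℝ | ∃ f : F, Φ f = x ∧ r = ‖f‖} with hQdef
    have hSne : S.Nonempty := ⟨‖g0‖, g0, hg0, rfl, rfl⟩
    have hB0 : Φ (B x - g0) = 0 := by rw [map_sub, hBsel x hx]; exact sub_self _
    have hTne : T.Nonempty := ⟨‖B x - g0‖, B x - g0, hB0, by simp [hg0], rfl⟩
    have hSbdd : BddBelow S := ⟨0, by rintro r ⟨g, -, -, rfl⟩; positivity⟩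
    have hTbdd : BddBelow T := ⟨0, by rintro r ⟨g, -, -, rfl⟩; positivity⟩
    have hQbdd : BddBelow Q := ⟨0, by rintro r ⟨g, -, rfl⟩; positivity⟩
    have hQnn : 0 ≤ quotNorm Φ x := Real.sInf_nonneg (by rintro r ⟨g, -, rfl⟩; positivity)
    have hTnn : 0 ≤ kerQuotNorm Φ Ψ (Ψ (B x)) :=
      Real.sInf_nonneg (by rintro r ⟨g, -, -, rfl⟩; positivity)
    have hBx : ‖B x‖ ≤ K * quotNorm Φ x := hBbd x hx
    constructor
    · -- sum ≤ (K+2) * sInf S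
      have key : ∀ r ∈ S, kerQuotNorm Φ Ψ (Ψ (B x)) + quotNorm Φ x ≤ (K + 2) * r := by
        rintro r ⟨g, hgΨ, hgΦ, rfl⟩
        have h1 : quotNorm Φ x ≤ ‖g‖ := csInf_le hQbdd ⟨g, hgΦ, rfl⟩
        have h2 : kerQuotNorm Φ Ψ (Ψ (B x)) ≤ ‖B x - g‖ :=
          csInf_le hTbdd ⟨B x - g, by simp [hBsel x hx, hgΦ], by simp [hgΨ], rfl⟩
        have h3 : ‖B x - g‖ ≤ ‖B x‖ + ‖g‖ := norm_sub_le _ _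
        nlinarith [norm_nonneg g]
      have hpos : (0:ℝ) < K + 2 := by linarith
      have := le_csInf hSne (fun r hr => (div_le_iff₀' hpos).mpr (key r hr)
        : ∀ r ∈ S, (kerQuotNorm Φ Ψ (Ψ (B x)) + quotNorm Φ x) / (K + 2) ≤ r)
      calc kerQuotNorm Φ Ψ (Ψ (B x)) + quotNorm Φ x
          = (K + 2) * ((kerQuotNorm Φ Ψ (Ψ (B x)) + quotNorm Φ x) / (K + 2)) := by
            field_simp
        _ ≤ (K + 2) * sInf S := by
            exact mul_le_mul_of_nonneg_left this (le_of_lt hpos)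
    · -- sInf S ≤ (K+2) * sum
      have main : sInf S ≤ K * quotNorm Φ x + kerQuotNorm Φ Ψ (Ψ (B x)) := by
        refine le_of_forall_pos_le_add ?_
        intro ε hε
        obtain ⟨r, ⟨h, hhΦ, hhΨ, rfl⟩, hrlt⟩ :=
          exists_lt_of_csInf_lt hTne (lt_add_of_pos_right (kerQuotNorm Φ Ψ (Ψ (B x))) hε)
        have hmem : ‖B x - h‖ ∈ S :=
          ⟨B x - h, by simp [hhΨ], by simp [hBsel x hx, hhΦ], rfl⟩
        calc sInf S ≤ ‖B x - h‖ := csInf_le hSbdd hmem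
          _ ≤ ‖B x‖ + ‖h‖ := norm_sub_le _ _
          _ ≤ K * quotNorm Φ x + (kerQuotNorm Φ Ψ (Ψ (B x)) + ε) := by
              exact add_le_add hBx (le_of_lt hrlt)
          _ = K * quotNorm Φ x + kerQuotNorm Φ Ψ (Ψ (B x)) + ε := by ring
      nlinarith
end

section
/- One has the set identities {x ∈ ℓ2 : Ω₁x ∈ ℓ2} = ℓ_f and {x ∈ ℓ2 : Ω₁x ∈ ℓ2 and Ω₂x − Ω₁(Ω₁x) ∈ ℓ2} = ℓ_g; that is, the domain of the Kalton–Peck map Ω₁ is the Orlicz space ℓ_f, and the domain of the second-order map x ↦ (Ω₂x, Ω₁x) (with values understood in Z₂) is the Orlicz space ℓ_g. -/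
noncomputable section

def Meml2 (x : ℕ → ℝ) : Prop := Summable (fun n => (x n) ^ 2)

noncomputable def l2norm (x : ℕ → ℝ) : ℝ := Real.sqrt (∑' n, (x n) ^ 2)

/-- The Kalton–Peck map `Ω₁`. -/
noncomputable def KP1 (x : ℕ → ℝ) : ℕ → ℝ := fun n =>
  if x n = 0 then 0 else 2 * x n * Real.log (|x n| / l2norm x)

/-- The second-order Kalton–Peck map `Ω₂`. -/
noncomputable def KP2 (x : ℕ → ℝ) : ℕ → ℝ := fun n =>
  if x n = 0 then 0 else 2 * x n * (Real.log (|x n| / l2norm x)) ^ 2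

/-- Membership in the Kalton–Peck space `Z₂` (pairs `(y, x)`). -/
def MemZ2 (p : (ℕ → ℝ) × (ℕ → ℝ)) : Prop :=
  Meml2 p.2 ∧ Meml2 (p.1 - KP1 p.2)

/-- The quasinorm of `Z₂`. -/
noncomputable def Z2norm (p : (ℕ → ℝ) × (ℕ → ℝ)) : ℝ :=
  l2norm (p.1 - KP1 p.2) + l2norm p.2

/-- Membership in the Rochberg space `Z₃` (triples `(w, y, x)`). -/
def MemZ3 (t : (ℕ → ℝ) × (ℕ → ℝ) × (ℕ → ℝ)) : Prop :=
  Meml2 t.2.2 ∧ MemZ2 (t.1 - KP2 t.2.2, t.2.1 - KP1 t.2.2)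

/-- The quasinorm of `Z₃`. -/
noncomputable def Z3norm (t : (ℕ → ℝ) × (ℕ → ℝ) × (ℕ → ℝ)) : ℝ :=
  Z2norm (t.1 - KP2 t.2.2, t.2.1 - KP1 t.2.2) + l2norm t.2.2

/-- Membership in the Orlicz space `ℓ_f`, `f(t) = t² log² t`. -/
def Memlf (x : ℕ → ℝ) : Prop := Meml2 x ∧ Meml2 (fun n => x n * Real.log |x n|)

noncomputable def lfnorm (x : ℕ → ℝ) : ℝ :=
  l2norm x + l2norm (fun n => x n * Real.log |x n|)

/-- Membership in the Orlicz space `ℓ_g`, `g(t) = t² log⁴ t`. -/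
def Memlg (x : ℕ → ℝ) : Prop := Meml2 x ∧ Meml2 (fun n => x n * (Real.log |x n|) ^ 2)

noncomputable def lgnorm (x : ℕ → ℝ) : ℝ :=
  l2norm x + l2norm (fun n => x n * (Real.log |x n|) ^ 2)

end

section Helpers

lemma meml2_zero : Meml2 (fun _ => (0:ℝ)) := by
  simpa [Meml2] using summable_zero

lemma meml2_congr_fun {f g : ℕ → ℝ} (h : ∀ n, f n = g n) (hf : Meml2 f) : Meml2 g :=
  hf.congr fun n => by rw [h n]

lemma meml2_add {f g : ℕ → ℝ} (hf : Meml2 f) (hg : Meml2 g) :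
    Meml2 (fun n => f n + g n) := by
  refine Summable.of_nonneg_of_le (fun n => sq_nonneg _)
    (fun n => ?_) ((hf.add hg).mul_left 2)
  show (f n + g n) ^ 2 ≤ 2 * (f n ^ 2 + g n ^ 2)
  nlinarith [sq_nonneg (f n - g n)]

lemma meml2_const_mul {f : ℕ → ℝ} (c : ℝ) (hf : Meml2 f) :
    Meml2 (fun n => c * f n) := by
  have := hf.mul_left (c ^ 2)
  refine this.congr fun n => by ring

lemma meml2_const_mul_iff {f : ℕ → ℝ} {c : ℝ} (hc : c ≠ 0) :
    Meml2 (fun n => c * f n) ↔ Meml2 f := by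
  refine ⟨fun h => ?_, meml2_const_mul c⟩
  have := meml2_const_mul c⁻¹ h
  exact meml2_congr_fun (fun n => by field_simp) this

lemma meml2_of_le {f g : ℕ → ℝ} (h : ∀ n, |g n| ≤ |f n|) (hf : Meml2 f) : Meml2 g := by
  refine Summable.of_nonneg_of_le (fun n => sq_nonneg _) (fun n => ?_) hf
  calc (g n)^2 = |g n|^2 := (sq_abs _).symm
  _ ≤ |f n|^2 := by nlinarith [h n, abs_nonneg (g n), abs_nonneg (f n)]
  _ = (f n)^2 := sq_abs _

lemma meml2_of_le3 {f1 f2 f3 g : ℕ → ℝ} (h1 : Meml2 f1) (h2 : Meml2 f2) (h3 : Meml2 f3)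
    (h : ∀ n, |g n| ≤ |f1 n| + |f2 n| + |f3 n|) : Meml2 g := by
  have habs : ∀ {f : ℕ → ℝ}, Meml2 f → Meml2 (fun n => |f n|) := by
    intro f hf; exact hf.congr fun n => (sq_abs _).symm
  have hs : Meml2 (fun n => |f1 n| + |f2 n| + |f3 n|) :=
    meml2_add (meml2_add (habs h1) (habs h2)) (habs h3)
  refine meml2_of_le (fun n => ?_) hs
  have hnn : (0:ℝ) ≤ |f1 n| + |f2 n| + |f3 n| := by positivity
  rw [abs_of_nonneg hnn]
  exact h n

lemma meml2_congr {f g h : ℕ → ℝ} (he : ∀ n, f n = g n + h n) (hh : Meml2 h) :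
    Meml2 f ↔ Meml2 g := by
  constructor
  · intro hf
    have : Meml2 (fun n => f n + (-1) * h n) := meml2_add hf (meml2_const_mul _ hh)
    exact meml2_congr_fun (fun n => by rw [he n]; ring) this
  · intro hg
    exact meml2_congr_fun (fun n => (he n).symm) (meml2_add hg hh)

lemma l2norm_pos {x : ℕ → ℝ} (hx : Meml2 x) (hne : x ≠ 0) : 0 < l2norm x := by
  obtain ⟨n, hn⟩ : ∃ n, x n ≠ 0 := by
    by_contra h
    push_neg at h
    exact hne (funext h)
  exact Real.sqrt_pos.mpr (Summable.tsum_pos hx (fun i => sq_nonneg _) n (by positivity))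

lemma log_le_quarter (u : ℝ) (hu : 0 < u) : Real.log u ≤ u / 4 + 4 := by
  have h1 : Real.log u = 2 * Real.log (Real.sqrt u) := by
    rw [Real.log_sqrt hu.le]; ring
  have h2 : Real.log (Real.sqrt u) ≤ Real.sqrt u - 1 :=
    Real.log_le_sub_one_of_pos (Real.sqrt_pos.mpr hu)
  have h3 : Real.sqrt u ^ 2 = u := Real.sq_sqrt hu.le
  nlinarith [Real.sqrt_nonneg u, sq_nonneg (Real.sqrt u - 4)]

lemma key_ineq (u : ℝ) (hu : 0 < u) : u * |Real.log u| ≤ u ^ 2 / 4 + 4 * u + 1 := by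
  rcases le_or_gt 1 u with h | h
  · have hl : 0 ≤ Real.log u := Real.log_nonneg h
    rw [abs_of_nonneg hl]
    nlinarith [log_le_quarter u hu]
  · have hl : Real.log u ≤ 0 := Real.log_nonpos hu.le h.le
    rw [abs_of_nonpos hl]
    have h2 : Real.log u⁻¹ ≤ u⁻¹ / 4 + 4 := log_le_quarter _ (by positivity)
    rw [Real.log_inv] at h2
    have h3 : u * u⁻¹ = 1 := mul_inv_cancel₀ hu.ne'
    nlinarith [sq_nonneg u]

end Helpers

lemma part1 {x : ℕ → ℝ} (hx : Meml2 x) :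
    Meml2 (KP1 x) ↔ Meml2 (fun n => x n * Real.log |x n|) := by
  by_cases hz : x = 0
  · subst hz
    refine iff_of_true ?_ ?_
    · exact meml2_congr_fun (fun n => by simp [KP1]) meml2_zero
    · exact meml2_congr_fun (fun n => by simp) meml2_zero
  · have hN : 0 < l2norm x := l2norm_pos hx hz
    have hid : ∀ n, KP1 x n =
        2 * (x n * Real.log |x n|) + (-2 * Real.log (l2norm x)) * x n := by
      intro n
      by_cases hxn : x n = 0
      · simp [KP1, hxn]
      · simp only [KP1, if_neg hxn]
        rw [Real.log_div (abs_ne_zero.mpr hxn) hN.ne']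
        ring
    rw [meml2_congr hid (meml2_const_mul _ hx)]
    exact meml2_const_mul_iff two_ne_zero

lemma KP1_apply {y : ℕ → ℝ} {n : ℕ} (h : y n ≠ 0) :
    KP1 y n = 2 * y n * Real.log (|y n| / l2norm y) := if_neg h

lemma KP2_apply {y : ℕ → ℝ} {n : ℕ} (h : y n ≠ 0) :
    KP2 y n = 2 * y n * (Real.log (|y n| / l2norm y)) ^ 2 := if_neg h

/-- The central pointwise estimate: `|(-4aℓ)(log 2 + log|ℓ| + c)| ≤ |aℓ²| + A|aℓ| + 4|a|`. -/
lemma bound_aux (a l c : ℝ) (hl : l ≠ 0) :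
    |(-(4 * (a * l))) * (Real.log 2 + Real.log |l| + c)| ≤
      |a * l ^ 2| + (4 * (|Real.log 2| + |c|) + 16) * |a * l| + 4 * |a| := by
  have e1 : |(-(4 * (a * l))) * (Real.log 2 + Real.log |l| + c)| =
      4 * (|a| * |l|) * |Real.log 2 + Real.log |l| + c| := by
    rw [abs_mul, abs_neg, abs_mul, abs_mul]
    norm_num
  have hS : |Real.log 2 + Real.log |l| + c| ≤
      |Real.log 2| + abs (Real.log |l|) + |c| :=
    (abs_add_le _ _).trans (by gcongr; exact abs_add_le _ _)
  have hupos : (0:ℝ) < |l| := abs_pos.mpr hl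
  have hkey := key_ineq |l| hupos
  rw [sq_abs] at hkey
  have t1 : 4 * (|a| * |l|) * |Real.log 2 + Real.log |l| + c| ≤
      4 * (|a| * |l|) * (|Real.log 2| + abs (Real.log |l|) + |c|) :=
    mul_le_mul_of_nonneg_left hS (by positivity)
  have t3 : |a| * (|l| * abs (Real.log |l|)) ≤ |a| * (l ^ 2 / 4 + 4 * |l| + 1) :=
    mul_le_mul_of_nonneg_left hkey (abs_nonneg _)
  have t4 : |a * l ^ 2| = |a| * l ^ 2 := by
    rw [abs_mul, abs_of_nonneg (sq_nonneg l)]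
  have t5 : |a * l| = |a| * |l| := abs_mul _ _
  rw [e1, t4, t5]
  nlinarith [abs_nonneg a, abs_nonneg l, abs_nonneg (Real.log |l|)]

lemma xlog_of_lg {x : ℕ → ℝ} (hx : Meml2 x)
    (hg : Meml2 (fun n => x n * (Real.log |x n|) ^ 2)) :
    Meml2 (fun n => x n * Real.log |x n|) := by
  refine meml2_of_le3 hx hg meml2_zero (fun n => ?_)
  simp only [abs_mul, abs_zero, add_zero]
  have h1 : |(Real.log |x n|) ^ 2| = (Real.log |x n|) ^ 2 := abs_of_nonneg (sq_nonneg _)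
  rw [h1]
  nlinarith [abs_nonneg (x n), abs_nonneg (Real.log |x n|), sq_abs (Real.log |x n|),
    mul_nonneg (abs_nonneg (x n)) (sq_nonneg (abs (Real.log |x n|) - 1))]

lemma part2 {x : ℕ → ℝ} (hx : Meml2 x) (h1 : Meml2 (KP1 x)) :
    Meml2 (KP2 x - KP1 (KP1 x)) ↔ Meml2 (fun n => x n * (Real.log |x n|) ^ 2) := by
  by_cases hz : x = 0
  · subst hz
    refine iff_of_true ?_ ?_
    · exact meml2_congr_fun (fun n => by simp [KP1, KP2]) meml2_zero
    · exact meml2_congr_fun (fun n => by simp) meml2_zero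
  have hN : 0 < l2norm x := l2norm_pos hx hz
  obtain ⟨L, hLdef⟩ : ∃ L : ℕ → ℝ, L = fun n => Real.log (|x n| / l2norm x) := ⟨_, rfl⟩
  have hL : ∀ n, L n = Real.log (|x n| / l2norm x) := fun n => by rw [hLdef]
  obtain ⟨D, hDdef⟩ : ∃ D : ℕ → ℝ, D = KP2 x - KP1 (KP1 x) := ⟨_, rfl⟩
  have hDap : ∀ n, D n = KP2 x n - KP1 (KP1 x) n := fun n => by rw [hDdef]; rfl
  -- x·log|x| ∈ ℓ2
  have hb : Meml2 (fun n => x n * Real.log |x n|) := (part1 hx).mp h1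
  -- Step B : x·L² ∈ ℓ2  ↔  x·log²|x| ∈ ℓ2
  have hB : Meml2 (fun n => x n * L n ^ 2) ↔
      Meml2 (fun n => x n * (Real.log |x n|) ^ 2) := by
    have hid : ∀ n, x n * L n ^ 2 =
        x n * (Real.log |x n|) ^ 2 +
        ((-2 * Real.log (l2norm x)) * (x n * Real.log |x n|) +
          (Real.log (l2norm x)) ^ 2 * x n) := by
      intro n
      rw [hL n]
      by_cases hxn : x n = 0
      · simp [hxn]
      · rw [Real.log_div (abs_ne_zero.mpr hxn) hN.ne']
        ring
    exact meml2_congr hid (meml2_add (meml2_const_mul _ hb) (meml2_const_mul _ hx))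
  rw [← hDdef, ← hB]
  -- Step A : x·L ∈ ℓ2
  have hxL : Meml2 (fun n => x n * L n) := by
    refine meml2_congr_fun (fun n => ?_) (meml2_const_mul (1/2) h1)
    rw [hL n]
    by_cases hxn : x n = 0
    · simp [KP1, hxn]
    · rw [KP1_apply hxn]; ring
  by_cases hK : KP1 x = 0
  · -- degenerate case: every nonzero coordinate sits at the norm
    have hLz : ∀ n, x n ≠ 0 → L n = 0 := by
      intro n hxn
      have h2 : 2 * x n * Real.log (|x n| / l2norm x) = 0 := by
        rw [← KP1_apply hxn, hK]; rfl
      rw [hL n]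
      rcases mul_eq_zero.mp h2 with h3 | h3
      · exact absurd h3 (mul_ne_zero two_ne_zero hxn)
      · exact h3
    refine iff_of_true ?_ ?_
    · refine meml2_congr_fun (fun n => ?_) meml2_zero
      rw [hDap n, hK]
      by_cases hxn : x n = 0
      · simp [KP1, KP2, hxn]
      · have := hLz n hxn
        rw [hL n] at this
        rw [KP2_apply hxn, this]
        simp [KP1]
    · refine meml2_congr_fun (fun n => ?_) meml2_zero
      by_cases hxn : x n = 0
      · simp [hxn]
      · rw [hLz n hxn]; ring
  -- nondegenerate case
  have hN1 : 0 < l2norm (KP1 x) := l2norm_pos h1 hK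
  obtain ⟨c, hc⟩ : ∃ c : ℝ, c = Real.log (l2norm x) - Real.log (l2norm (KP1 x)) := ⟨_, rfl⟩
  obtain ⟨A, hA⟩ : ∃ A : ℝ, A = 4 * (|Real.log 2| + |c|) + 16 := ⟨_, rfl⟩
  have hA0 : 0 ≤ A := by rw [hA]; positivity
  have hmaster : ∀ n, |D n + 2 * (x n * L n ^ 2)| ≤
      |x n * L n ^ 2| + A * |x n * L n| + 4 * |x n| := by
    intro n
    by_cases hxn : x n = 0
    · have hD0 : D n = 0 := by
        rw [hDap n]
        simp [KP1, KP2, hxn]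
      rw [hD0, hxn]
      simp only [zero_mul, mul_zero, add_zero, zero_add, abs_zero]
      positivity
    by_cases hLn : L n = 0
    · have hKn : KP1 x n = 0 := by
        rw [KP1_apply hxn, ← hL n, hLn]; ring
      have hD0 : D n = 0 := by
        have hz2 : KP1 (KP1 x) n = 0 := if_pos hKn
        rw [hDap n, KP2_apply hxn, ← hL n, hLn, hz2]
        ring
      rw [hD0, hLn]
      simp only [zero_mul, mul_zero, add_zero, zero_add, abs_zero, ne_eq,
        OfNat.ofNat_ne_zero, not_false_eq_true, zero_pow]
      positivity
    -- generic point
    have hKn : KP1 x n = 2 * x n * L n := by rw [KP1_apply hxn, ← hL n]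
    have hKnne : KP1 x n ≠ 0 := by
      rw [hKn]; exact mul_ne_zero (mul_ne_zero two_ne_zero hxn) hLn
    have habsK : |KP1 x n| = 2 * |x n| * |L n| := by
      rw [hKn, abs_mul, abs_mul, abs_two]
    have hlog1 : Real.log (|KP1 x n| / l2norm (KP1 x)) =
        Real.log 2 + Real.log |x n| + Real.log |L n| - Real.log (l2norm (KP1 x)) := by
      rw [Real.log_div (abs_ne_zero.mpr hKnne) hN1.ne', habsK,
        Real.log_mul (by positivity) (abs_ne_zero.mpr hLn),
        Real.log_mul two_ne_zero (abs_ne_zero.mpr hxn)]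
    have hlx : Real.log |x n| = L n + Real.log (l2norm x) := by
      rw [hL n, Real.log_div (abs_ne_zero.mpr hxn) hN.ne']; ring
    have hD : D n + 2 * (x n * L n ^ 2) =
        -(4 * (x n * L n)) * (Real.log 2 + Real.log |L n| + c) := by
      rw [hDap n, KP2_apply hxn, KP1_apply hKnne, hlog1, hlx, hKn, ← hL n, hc]
      ring
    rw [hD, hA]
    exact bound_aux (x n) (L n) c hLn
  constructor
  · intro hDm
    refine meml2_of_le3 hDm (meml2_const_mul A (by exact hxL)) (meml2_const_mul 4 hx)
      (fun n => ?_)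
    have hm := hmaster n
    have htri : |2 * (x n * L n ^ 2)| ≤ |D n + 2 * (x n * L n ^ 2)| + |D n| := by
      have h := abs_add_le (D n + 2 * (x n * L n ^ 2)) (-(D n))
      simpa [abs_neg] using h
    have h2 : |2 * (x n * L n ^ 2)| = 2 * |x n * L n ^ 2| := by rw [abs_mul]; norm_num
    have hAabs : |A * (x n * L n)| = A * |x n * L n| := by rw [abs_mul, abs_of_nonneg hA0]
    have h4 : |4 * x n| = 4 * |x n| := by rw [abs_mul]; norm_num
    rw [hAabs, h4]
    rw [h2] at htri
    linarith
  · intro hM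
    refine meml2_of_le3 (meml2_const_mul 3 hM) (meml2_const_mul A (by exact hxL))
      (meml2_const_mul 4 hx) (fun n => ?_)
    have hm := hmaster n
    have htri : |D n| ≤ |D n + 2 * (x n * L n ^ 2)| + |2 * (x n * L n ^ 2)| := by
      have h := abs_add_le (D n + 2 * (x n * L n ^ 2)) (-(2 * (x n * L n ^ 2)))
      simpa [abs_neg] using h
    have h2 : |2 * (x n * L n ^ 2)| = 2 * |x n * L n ^ 2| := by rw [abs_mul]; norm_num
    have h3 : |3 * (x n * L n ^ 2)| = 3 * |x n * L n ^ 2| := by rw [abs_mul]; norm_num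
    have hAabs : |A * (x n * L n)| = A * |x n * L n| := by rw [abs_mul, abs_of_nonneg hA0]
    have h4 : |4 * x n| = 4 * |x n| := by rw [abs_mul]; norm_num
    rw [h3, hAabs, h4]
    rw [h2] at htri
    linarith

/-- The domain of the Kalton–Peck map `Ω₁` (viewed with values in `ℓ₂`) is the Orlicz space
`ℓ_f`, and the domain of the second-order map `x ↦ (Ω₂x, Ω₁x)` (viewed with values in `Z₂`,
i.e. requiring `Ω₁x ∈ ℓ₂` and `Ω₂x − Ω₁(Ω₁x) ∈ ℓ₂`) is the Orlicz space `ℓ_g`. -/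
theorem domains_of_KP_maps :
    ({x : ℕ → ℝ | Meml2 x ∧ Meml2 (KP1 x)} = {x : ℕ → ℝ | Memlf x}) ∧
    ({x : ℕ → ℝ | Meml2 x ∧ Meml2 (KP1 x) ∧ Meml2 (KP2 x - KP1 (KP1 x))} =
      {x : ℕ → ℝ | Memlg x}) := by
  constructor
  · ext x
    simp only [Set.mem_setOf_eq, Memlf]
    exact ⟨fun ⟨h2, h1⟩ => ⟨h2, (part1 h2).mp h1⟩, fun ⟨h2, hb⟩ => ⟨h2, (part1 h2).mpr hb⟩⟩
  · ext x
    simp only [Set.mem_setOf_eq, Memlg]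
    constructor
    · rintro ⟨h2, h1, hD⟩
      exact ⟨h2, (part2 h2 h1).mp hD⟩
    · rintro ⟨h2, hg⟩
      have hb := xlog_of_lg h2 hg
      have h1 := (part1 h2).mpr hb
      exact ⟨h2, h1, (part2 h2 h1).mpr hg⟩
end

section
/- Let x ∈ ℓ2 satisfy |x(n)| < 1 for all n, and define h : ℕ → ℝ by h(n) = x(n)·log²|x(n)| / (log|x(n)| + 2·log|log|x(n)||) when x(n) ≠ 0 and h(n) = 0 when x(n) = 0 (the denominator never vanishes since t·log²t < 1 for 0 < t < 1). Then h ∈ ℓ2 if and only if (x(n)·log|x(n)|)ₙ ∈ ℓ2, i.e. if and only if x ∈ ℓ_f. (This is the computational core of the identity Δ₀(ker Δ₂) = Δ₀(ker Δ₁) = ℓ_f.) -/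
/-- For `x ∈ ℓ₂` with `|x(n)| < 1` for all `n`, the sequence
`h(n) = x(n)·log²|x(n)| / (log|x(n)| + 2·log|log|x(n)||)` (set to `0` when `x(n) = 0`)
is square-summable if and only if `(x(n)·log|x(n)|)ₙ` is, i.e. iff `x ∈ ℓ_f`. -/
theorem core_of_Delta0_ker_Delta2 (x : ℕ → ℝ) (hx : Meml2 x) (hb : ∀ n, |x n| < 1)
    (h : ℕ → ℝ)
    (hdef : ∀ n, h n = if x n = 0 then 0 else
      x n * (Real.log |x n|) ^ 2 /
        (Real.log |x n| + 2 * Real.log (abs (Real.log |x n|)))) :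
    Meml2 h ↔ Meml2 (fun n => x n * Real.log |x n|) := by
  unfold Meml2 at hx ⊢
  have he : (2:ℝ) < Real.exp 1 := by
    have := Real.exp_one_gt_d9; linarith
  set c : ℝ := 1 - 2 / Real.exp 1 with hc
  have hc0 : 0 < c := by
    have h1 : (0:ℝ) < Real.exp 1 := Real.exp_pos 1
    rw [hc, sub_pos, div_lt_one h1]; exact he
  clear_value c
  have key : ∀ n, (h n)^2 ≤ (1/c^2) * (x n * Real.log |x n|)^2 ∧
      (x n * Real.log |x n|)^2 ≤ (x n)^2 + (h n)^2 := by
    intro n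
    by_cases hz : x n = 0
    · simp [hdef n, hz]
    · have ht0 : 0 < |x n| := abs_pos.mpr hz
      have hlt : Real.log |x n| < 0 := Real.log_neg ht0 (hb n)
      set L : ℝ := -Real.log |x n| with hLdef
      have hL : 0 < L := neg_pos.mpr hlt
      have habs : abs (Real.log (abs (x n))) = L := abs_of_neg hlt
      have hlogL : Real.log L ≤ L / Real.exp 1 := by
        have hp : 0 < L / Real.exp 1 := by positivity
        have := Real.log_le_sub_one_of_pos hp
        rw [Real.log_div (ne_of_gt hL) (Real.exp_ne_zero 1), Real.log_exp] at this
        linarith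
      set D : ℝ := Real.log (abs (x n)) + 2 * Real.log (abs (Real.log (abs (x n)))) with hDdef
      have hDeq : D = -L + 2 * Real.log L := by rw [hDdef, habs, hLdef]; ring
      have hDle : D ≤ -(c * L) := by
        have he0 : (0:ℝ) < Real.exp 1 := Real.exp_pos 1
        have h2 : -(c * L) = -L + 2 / Real.exp 1 * L := by rw [hc]; ring
        have h3 : 2 * (L / Real.exp 1) = 2 / Real.exp 1 * L := by ring
        rw [hDeq, h2]
        linarith
      have hDneg : D < 0 := lt_of_le_of_lt hDle (by nlinarith)
      have hD0 : D ≠ 0 := ne_of_lt hDneg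
      have hh : h n = x n * (Real.log |x n|) ^ 2 / D := by rw [hdef n, if_neg hz, hDdef]
      have hsq : (Real.log |x n|)^2 = L^2 := by rw [hLdef]; ring
      have hident : (h n)^2 * D^2 = (x n)^2 * L^4 := by
        rw [hh, div_pow, hsq]
        field_simp
      clear_value L D
      have hD2 : c^2 * L^2 ≤ D^2 := by
        have h1 : (0:ℝ) ≤ -D - c*L := by linarith
        have h2 : (0:ℝ) ≤ -D + c*L := by nlinarith [mul_pos hc0 hL]
        nlinarith [mul_nonneg h1 h2]
      constructor
      · rw [mul_pow, hsq, div_mul_eq_mul_div, le_div_iff₀ (by positivity : (0:ℝ) < c^2)]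
        nlinarith [mul_le_mul_of_nonneg_left hD2 (sq_nonneg (h n)), mul_pos hL hL,
          sq_nonneg (h n)]
      · rw [mul_pow, hsq]
        rcases le_or_gt L 1 with hL1 | hL1
        · have h4 : (0:ℝ) ≤ (x n)^2 * (1 - L^2) :=
            mul_nonneg (sq_nonneg _) (by nlinarith)
          nlinarith [sq_nonneg (h n)]
        · have hlogL0 : 0 ≤ Real.log L := Real.log_nonneg (le_of_lt hL1)
          have hD2' : D^2 ≤ L^2 := by
            have : -L ≤ D := by rw [hDeq]; linarith
            nlinarith
          have h5 : (x n)^2 * L^2 * L^2 ≤ (h n)^2 * L^2 := by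
            calc (x n)^2 * L^2 * L^2 = (h n)^2 * D^2 := by rw [hident]; ring
              _ ≤ (h n)^2 * L^2 := mul_le_mul_of_nonneg_left hD2' (sq_nonneg (h n))
          have h6 : (x n)^2 * L^2 ≤ (h n)^2 :=
            le_of_mul_le_mul_right h5 (by positivity)
          linarith [sq_nonneg (x n)]
  constructor
  · intro hh
    exact Summable.of_nonneg_of_le (fun n => sq_nonneg _) (fun n => (key n).2) (hx.add hh)
  · intro hf
    exact Summable.of_nonneg_of_le (fun n => sq_nonneg _) (fun n => (key n).1) (hf.mul_left _)
end
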